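/- Let A be a hyperbolic invertible linear map of ℝ^d with one-dimensional unstable eigenspace E^u spanned by a unit eigenvector v with eigenvalue μ, |μ| > 1. Suppose W ⊆ ℝ^d is a set of pairs (x,y), y ≠ x, such that (y−x)/‖y−x‖ → v uniformly as ‖y−x‖ → ∞ over pairs in W. Then for every n ∈ ℕ and ε > 0 there exists M > 0 such that for all (x,y) ∈ W with ‖x−y‖ > M: (1−ε)|μ|^n ‖y−x‖ ≤ ‖A^n x − A^n y‖ ≤ (1+ε)|μ|^n ‖y−x‖. -/

import Mathlib

/-!
Writing a long chord as `w = ‖w‖ • u` with `u` a unit vector close to `v`, one has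
`A ^ n w = ‖w‖ • (A ^ n) u` and `(A ^ n) u` is within `‖A ^ n‖ ‖u - v‖` of `μ ^ n • v`.
For fixed `n` the factor `‖A ^ n‖` is a constant, so it suffices to take the chords long
enough that `‖u - v‖ < ε |μ| ^ n / (‖A ^ n‖ + 1)`.
-/

theorem ContinuousLinearMap.pow_apply_of_apply_eq_smul {E : Type*} [NormedAddCommGroup E]
    [NormedSpace ℝ E] {A : E →L[ℝ] E} {μ : ℝ} {v : E} (h : A v = μ • v) (n : ℕ) :
    (A ^ n) v = μ ^ n • v := by
  induction n with
  | zero => simp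
  | succ k ih => rw [pow_succ', mul_apply_eq_comp, ih, map_smul, h, smul_smul, pow_succ]

theorem ContinuousLinearMap.abs_norm_apply_sub_norm_mul_le {E F : Type*} [NormedAddCommGroup E]
    [NormedSpace ℝ E] [NormedAddCommGroup F] [NormedSpace ℝ F] (T : E →L[ℝ] F) (w v : E) :
    |‖T w‖ - ‖w‖ * ‖T v‖| ≤ ‖T‖ * ‖w‖ * ‖‖w‖⁻¹ • w - v‖ := by
  rcases eq_or_ne w 0 with rfl | hw
  · simp
  set u := ‖w‖⁻¹ • w
  have hTw : ‖T w‖ = ‖w‖ * ‖T u‖ := by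
    rw [map_smul, norm_smul, ← mul_assoc, norm_inv, norm_norm,
      mul_inv_cancel₀ (norm_ne_zero_iff.mpr hw), one_mul]
  calc |‖T w‖ - ‖w‖ * ‖T v‖| = ‖w‖ * |‖T u‖ - ‖T v‖| := by
        rw [hTw, ← mul_sub, abs_mul, abs_norm]
    _ ≤ ‖w‖ * ‖T (u - v)‖ := by
        gcongr
        rw [map_sub]
        exact abs_norm_sub_norm_le _ _
    _ ≤ ‖w‖ * (‖T‖ * ‖u - v‖) := by gcongr; exact T.le_opNorm _
    _ = ‖T‖ * ‖w‖ * ‖u - v‖ := by ring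

theorem stmt_14_general (d : ℕ)
    (A : EuclideanSpace ℝ (Fin d) →L[ℝ] EuclideanSpace ℝ (Fin d))
    (μ : ℝ) (hμ : 1 < |μ|) (v : EuclideanSpace ℝ (Fin d)) (hv : ‖v‖ = 1)
    (heig : A v = μ • v)
    (W : Set (EuclideanSpace ℝ (Fin d) × EuclideanSpace ℝ (Fin d)))
    (hconv : ∀ δ : ℝ, 0 < δ → ∃ R : ℝ, ∀ p ∈ W, R < ‖p.2 - p.1‖ →
      ‖(‖p.2 - p.1‖⁻¹ • (p.2 - p.1)) - v‖ < δ) :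
    ∀ (n : ℕ) (ε : ℝ), 0 < ε → ∃ M : ℝ, 0 < M ∧ ∀ p ∈ W, M < ‖p.1 - p.2‖ →
      (1 - ε) * |μ| ^ n * ‖p.2 - p.1‖ ≤ ‖(A ^ n) p.1 - (A ^ n) p.2‖ ∧
      ‖(A ^ n) p.1 - (A ^ n) p.2‖ ≤ (1 + ε) * |μ| ^ n * ‖p.2 - p.1‖ := by
  intro n ε hε
  have hAv : ‖(A ^ n) v‖ = |μ| ^ n := by
    rw [A.pow_apply_of_apply_eq_smul heig, norm_smul, hv, mul_one, norm_pow, Real.norm_eq_abs]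
  have hμn : 0 < |μ| ^ n := pow_pos (one_pos.trans hμ) n
  obtain ⟨R, hR⟩ := hconv (ε * |μ| ^ n / (‖A ^ n‖ + 1)) (by positivity)
  refine ⟨max R 1, by positivity, fun p hp hM => ?_⟩
  rw [norm_sub_rev] at hM
  set w := p.2 - p.1
  have hdir := hR p hp (lt_of_le_of_lt (le_max_left _ _) hM)
  have hdist : |‖(A ^ n) w‖ - ‖w‖ * |μ| ^ n| ≤ ε * |μ| ^ n * ‖w‖ := by
    calc |‖(A ^ n) w‖ - ‖w‖ * |μ| ^ n| ≤ ‖A ^ n‖ * ‖w‖ * ‖‖w‖⁻¹ • w - v‖ :=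
          hAv ▸ (A ^ n).abs_norm_apply_sub_norm_mul_le w v
      _ ≤ (‖A ^ n‖ + 1) * ‖w‖ * (ε * |μ| ^ n / (‖A ^ n‖ + 1)) := by gcongr; linarith
      _ = ε * |μ| ^ n * ‖w‖ := by field_simp
  have hchord : ‖(A ^ n) p.1 - (A ^ n) p.2‖ = ‖(A ^ n) w‖ := by
    rw [norm_sub_rev, ← map_sub]
  rw [hchord]
  constructor <;> linarith [abs_le.mp hdist]

/-- Lemma `linalg`: let `A` be a hyperbolic invertible linear map with
one-dimensional unstable eigenspace spanned by the unit eigenvector `v`, `A v = μ v`,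
`|μ| > 1`.  If `W` is a set of pairs of distinct points whose chord directions converge
uniformly to `v` as the distance tends to infinity, then for every `n` and `ε > 0` there is
`M > 0` with `(1-ε)|μ|^n ‖y-x‖ ≤ ‖A^n x - A^n y‖ ≤ (1+ε)|μ|^n ‖y-x‖` whenever
`(x,y) ∈ W` and `‖x-y‖ > M`. -/
theorem stmt_14 (d : ℕ)
    (A : EuclideanSpace ℝ (Fin d) →L[ℝ] EuclideanSpace ℝ (Fin d))
    (hA : Function.Bijective A)
    (μ : ℝ) (hμ : 1 < |μ|) (v : EuclideanSpace ℝ (Fin d)) (hv : ‖v‖ = 1)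
    (heig : A v = μ • v)
    (W : Set (EuclideanSpace ℝ (Fin d) × EuclideanSpace ℝ (Fin d)))
    (hne : ∀ p ∈ W, p.2 ≠ p.1)
    (hconv : ∀ δ : ℝ, 0 < δ → ∃ R : ℝ, ∀ p ∈ W, R < ‖p.2 - p.1‖ →
      ‖(‖p.2 - p.1‖⁻¹ • (p.2 - p.1)) - v‖ < δ) :
    ∀ (n : ℕ) (ε : ℝ), 0 < ε → ∃ M : ℝ, 0 < M ∧ ∀ p ∈ W, M < ‖p.1 - p.2‖ →
      (1 - ε) * |μ| ^ n * ‖p.2 - p.1‖ ≤ ‖(A ^ n) p.1 - (A ^ n) p.2‖ ∧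
      ‖(A ^ n) p.1 - (A ^ n) p.2‖ ≤ (1 + ε) * |μ| ^ n * ‖p.2 - p.1‖ :=
  stmt_14_general d A μ hμ v hv heig W hconv
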